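/- arXiv:1412.7404 — 6 statements merged into one kernel-verified Lean document; each statement's English description precedes it below -/
import Mathlib

section
/- Let B be an admissible Banach sequence space with shift constant N, let s ∈ B and λ ∈ (0,1). Then the sequence s² defined by s²ₙ = Σ_{m≥1} λᵐ s_{n+m} belongs to B and satisfies ‖s²‖_B ≤ (Nλ/(1−λ))‖s‖_B. -/
/-- A Banach sequence space: a linear subspace of the real sequences indexed by `ℤ`,
with a norm that is monotone with respect to pointwise absolute value, and complete. -/
structure BanachSeqSpace where
  mem : (ℤ → ℝ) → Prop
  bnorm : (ℤ → ℝ) → ℝ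
  zero_mem : mem 0
  add_mem : ∀ {s t : ℤ → ℝ}, mem s → mem t → mem (s + t)
  smul_mem : ∀ (c : ℝ) {s : ℤ → ℝ}, mem s → mem (c • s)
  bnorm_nonneg : ∀ s : ℤ → ℝ, 0 ≤ bnorm s
  bnorm_eq_zero : ∀ {s : ℤ → ℝ}, mem s → (bnorm s = 0 ↔ s = 0)
  bnorm_add_le : ∀ {s t : ℤ → ℝ}, mem s → mem t → bnorm (s + t) ≤ bnorm s + bnorm t
  bnorm_smul : ∀ (c : ℝ) (s : ℤ → ℝ), bnorm (c • s) = |c| * bnorm s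
  mono_mem : ∀ {s t : ℤ → ℝ}, mem t → (∀ n, |s n| ≤ |t n|) → mem s
  mono_norm : ∀ {s t : ℤ → ℝ}, mem t → (∀ n, |s n| ≤ |t n|) → bnorm s ≤ bnorm t
  complete : ∀ u : ℕ → ℤ → ℝ, (∀ k, mem (u k)) →
    (∀ ε : ℝ, 0 < ε → ∃ K : ℕ, ∀ k l, K ≤ k → K ≤ l → bnorm (u k - u l) < ε) →
    ∃ s : ℤ → ℝ, mem s ∧ ∀ ε : ℝ, 0 < ε → ∃ K : ℕ, ∀ k, K ≤ k → bnorm (u k - s) < ε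

/-- An admissible Banach sequence space: contains the characteristic functions of
singletons with positive norm, and is invariant under shifts with a uniform bound `N`. -/
structure AdmissibleSeqSpace extends BanachSeqSpace where
  N : ℝ
  N_pos : 0 < N
  indicator_mem : ∀ n : ℤ, mem (fun k => if k = n then (1 : ℝ) else 0)
  indicator_pos : ∀ n : ℤ, 0 < bnorm (fun k => if k = n then (1 : ℝ) else 0)
  shift_mem : ∀ {s : ℤ → ℝ}, mem s → ∀ m : ℤ, mem (fun n => s (n + m))
  shift_norm : ∀ {s : ℤ → ℝ}, mem s → ∀ m : ℤ, bnorm (fun n => s (n + m)) ≤ N * bnorm s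

/-!
The elements of `B` form a Banach space in which every coordinate is a continuous functional:
`|t n| ‖δₙ‖ ≤ ‖t‖` by monotonicity, and `‖δ₀‖ ≤ N ‖δₙ‖` by shift invariance. In that space the
series `∑ λ^m τ_m s` of shifts converges absolutely, since `‖λ^m τ_m s‖ ≤ N λ^m ‖s‖`; its sum
lies in `B` with norm at most `N λ/(1-λ) ‖s‖`, and continuity of the coordinates identifies it
pointwise with `s²`.
-/

noncomputable section

namespace BanachSeqSpace

variable (B : BanachSeqSpace)

def toSubmodule : Submodule ℝ (ℤ → ℝ) where
  carrier := {s | B.mem s}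
  add_mem' := B.add_mem
  zero_mem' := B.zero_mem
  smul_mem' c _ := B.smul_mem c

-- A type synonym: the subspace topology inherited from `ℤ → ℝ` is not the norm topology.
def Elem : Type := B.toSubmodule

instance : AddCommGroup B.Elem := inferInstanceAs (AddCommGroup B.toSubmodule)

instance : Module ℝ B.Elem := inferInstanceAs (Module ℝ B.toSubmodule)

instance : CoeFun B.Elem fun _ => ℤ → ℝ := ⟨fun x => (x : B.toSubmodule).1⟩

instance : Norm B.Elem := ⟨fun x => B.bnorm x⟩

variable {B}

def Elem.mk (s : ℤ → ℝ) (hs : B.mem s) : B.Elem := (⟨s, hs⟩ : B.toSubmodule)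

theorem Elem.mem (x : B.Elem) : B.mem x := (x : B.toSubmodule).2

variable (B)

theorem abs_apply_mul_bnorm_indicator_le {t : ℤ → ℝ} (ht : B.mem t) (n : ℤ) :
    |t n| * B.bnorm (fun k => if k = n then 1 else 0) ≤ B.bnorm t := by
  rw [← abs_of_nonneg (abs_nonneg (t n)), ← B.bnorm_smul]
  refine B.mono_norm ht fun k => ?_
  by_cases hk : k = n <;> simp [hk]

theorem normedSpaceCore : NormedSpace.Core ℝ B.Elem where
  norm_nonneg x := B.bnorm_nonneg x
  norm_smul c x := B.bnorm_smul c x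
  norm_triangle x y := B.bnorm_add_le x.mem y.mem
  norm_eq_zero_iff x := (B.bnorm_eq_zero x.mem).trans Submodule.coe_eq_zero

instance : NormedAddCommGroup B.Elem := .ofCore B.normedSpaceCore

instance : NormedSpace ℝ B.Elem := .ofCore B.normedSpaceCore

instance : CompleteSpace B.Elem := by
  refine Metric.complete_of_cauchySeq_tendsto fun u hu => ?_
  obtain ⟨s, hs, hlim⟩ := B.complete (fun k => u k) (fun k => (u k).mem) fun ε hε => by
    obtain ⟨K, hK⟩ := Metric.cauchySeq_iff.1 hu ε hε
    exact ⟨K, fun k l hk hl => (dist_eq_norm (u k) (u l)).symm.trans_lt (hK k hk l hl)⟩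
  refine ⟨Elem.mk s hs, Metric.tendsto_atTop.2 fun ε hε => ?_⟩
  obtain ⟨K, hK⟩ := hlim ε hε
  exact ⟨K, fun k hk => (dist_eq_norm (u k) _).trans_lt (hK k hk)⟩

end BanachSeqSpace

namespace AdmissibleSeqSpace

open BanachSeqSpace

variable (B : AdmissibleSeqSpace)

theorem bnorm_indicator_zero_le (n : ℤ) :
    B.bnorm (fun k => if k = 0 then 1 else 0) ≤
      B.N * B.bnorm (fun k => if k = n then 1 else 0) := by
  simpa using B.shift_norm (B.indicator_mem n) n

theorem abs_apply_le {t : ℤ → ℝ} (ht : B.mem t) (n : ℤ) :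
    |t n| ≤ B.N / B.bnorm (fun k => if k = 0 then 1 else 0) * B.bnorm t := by
  rw [div_mul_eq_mul_div, le_div_iff₀ (B.indicator_pos 0)]
  calc |t n| * B.bnorm (fun k => if k = 0 then 1 else 0)
      ≤ |t n| * (B.N * B.bnorm (fun k => if k = n then 1 else 0)) :=
        mul_le_mul_of_nonneg_left (B.bnorm_indicator_zero_le n) (abs_nonneg _)
    _ = B.N * (|t n| * B.bnorm (fun k => if k = n then 1 else 0)) := by ring
    _ ≤ B.N * B.bnorm t :=
        mul_le_mul_of_nonneg_left (B.abs_apply_mul_bnorm_indicator_le ht n) B.N_pos.le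

def coord (n : ℤ) : B.Elem →L[ℝ] ℝ :=
  LinearMap.mkContinuous
    { toFun := fun x => x n, map_add' := fun _ _ => rfl, map_smul' := fun _ _ => rfl }
    (B.N / B.bnorm (fun k => if k = 0 then 1 else 0)) fun x => B.abs_apply_le x.mem n

theorem mem_tsum_and_bnorm_tsum_le {ι : Type*} {u : ι → ℤ → ℝ} (hu : ∀ i, B.mem (u i))
    {g : ι → ℝ} {a : ℝ} (hg : HasSum g a) (hug : ∀ i, B.bnorm (u i) ≤ g i) :
    B.mem (fun n => ∑' i, u i n) ∧ B.bnorm (fun n => ∑' i, u i n) ≤ a := by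
  let v : ι → B.Elem := fun i => Elem.mk (u i) (hu i)
  have hv : Summable v := .of_norm_bounded hg.summable hug
  have hcoe : (fun n => ∑' i, u i n) = ⇑(∑' i, v i) :=
    funext fun n => ((B.coord n).map_tsum hv).symm
  rw [hcoe]
  exact ⟨(∑' i, v i).mem, (tsum_of_norm_bounded hg hug : ‖∑' i, v i‖ ≤ a)⟩

end AdmissibleSeqSpace

end

/-- For `s ∈ B` and `λ ∈ (0,1)`, the sequence `s²ₙ = Σ_{m ≥ 1} λ^m s_{n+m}` belongs to `B`
and `‖s²‖_B ≤ (Nλ/(1-λ)) ‖s‖_B`. -/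
theorem stmt3 (B : AdmissibleSeqSpace) (s : ℤ → ℝ) (hs : B.mem s)
    (lam : ℝ) (h0 : 0 < lam) (h1 : lam < 1) :
    B.mem (fun n => ∑' m : ℕ, lam ^ (m + 1) * s (n + (m + 1))) ∧
    B.bnorm (fun n => ∑' m : ℕ, lam ^ (m + 1) * s (n + (m + 1))) ≤
      (B.N * lam / (1 - lam)) * B.bnorm s := by
  have hgeom : HasSum (fun m : ℕ => lam ^ (m + 1) * (B.N * B.bnorm s))
      ((B.N * lam / (1 - lam)) * B.bnorm s) := by
    rw [show B.N * lam / (1 - lam) * B.bnorm s = lam * (1 - lam)⁻¹ * (B.N * B.bnorm s) by ring]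
    simpa only [pow_succ'] using
      ((hasSum_geometric_of_lt_one h0.le h1).mul_left lam).mul_right (B.N * B.bnorm s)
  refine B.mem_tsum_and_bnorm_tsum_le (fun m => ?_) hgeom fun m => ?_
  · exact B.smul_mem _ (B.shift_mem hs _)
  · calc B.bnorm (lam ^ (m + 1) • fun n => s (n + (m + 1)))
        = lam ^ (m + 1) * B.bnorm (fun n => s (n + (m + 1))) := by
          rw [B.bnorm_smul, abs_of_pos (pow_pos h0 _)]
      _ ≤ lam ^ (m + 1) * (B.N * B.bnorm s) :=
          mul_le_mul_of_nonneg_left (B.shift_norm hs _) (pow_pos h0 _).le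
end

section
/- Let X be a Banach space, (Aₘ)_{m∈ℤ} a sequence of bounded linear operators on X, (‖·‖ₙ)_{n∈ℤ} a family of norms equivalent to the given norm, and B an admissible Banach sequence space. The linear operator T_B defined on the subspace D(T_B) = {x ∈ Y_B : T_B x ∈ Y_B} of Y_B by (T_B x)ₙ = xₙ − A_{n−1} x_{n−1} is a closed operator. -/
open Filter Topology

lemma coord_tendsto (B : AdmissibleSeqSpace) (s : ℕ → ℤ → ℝ)
    (hnn : ∀ k m, 0 ≤ s k m) (hmem : ∀ k, B.mem (s k))
    (h : Tendsto (fun k => B.bnorm (s k)) atTop (nhds 0)) (n : ℤ) :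
    Tendsto (fun k => s k n) atTop (nhds 0) := by
  have hcpos : 0 < B.bnorm (fun m => if m = n then (1 : ℝ) else 0) := B.indicator_pos n
  set c := B.bnorm (fun m => if m = n then (1 : ℝ) else 0) with hc
  have key : ∀ k, s k n ≤ c⁻¹ * B.bnorm (s k) := by
    intro k
    have hb : B.bnorm ((s k n) • (fun m => if m = n then (1 : ℝ) else 0)) ≤ B.bnorm (s k) := by
      apply B.mono_norm (hmem k)
      intro m
      simp only [Pi.smul_apply, smul_eq_mul]
      by_cases hm : m = n
      · subst hm; simp [abs_of_nonneg (hnn k m)]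
      · simp [hm, abs_nonneg]
    rw [B.bnorm_smul, abs_of_nonneg (hnn k n), ← hc] at hb
    calc s k n = c⁻¹ * (s k n * c) := by field_simp
    _ ≤ c⁻¹ * B.bnorm (s k) :=
        mul_le_mul_of_nonneg_left hb (le_of_lt (inv_pos.mpr hcpos))
  have h2 : Tendsto (fun k => c⁻¹ * B.bnorm (s k)) atTop (nhds 0) := by
    simpa using h.const_mul c⁻¹
  exact squeeze_zero (fun k => hnn k n) key h2

/-- The operator `(T_B x)ₙ = xₙ - A_{n-1} x_{n-1}` with domain
`D(T_B) = {x ∈ Y_B : T_B x ∈ Y_B}` of `Y_B` is closed: if `xᵏ ∈ D(T_B)`, `xᵏ → x` in `Y_B`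
and `T_B xᵏ → y` in `Y_B`, then `T_B x = y` (so in particular `x ∈ D(T_B)`). -/
theorem stmt7 (B : AdmissibleSeqSpace) {X : Type*} [NormedAddCommGroup X]
    [NormedSpace ℝ X] [CompleteSpace X]
    (A : ℤ → X →L[ℝ] X)
    (nn : ℤ → X → ℝ)
    (hnadd : ∀ (n : ℤ) (u v : X), nn n (u + v) ≤ nn n u + nn n v)
    (hnsmul : ∀ (n : ℤ) (c : ℝ) (v : X), nn n (c • v) = |c| * nn n v)
    (heq : ∀ n : ℤ, ∃ c C : ℝ, 0 < c ∧ 0 < C ∧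
      ∀ v : X, c * ‖v‖ ≤ nn n v ∧ nn n v ≤ C * ‖v‖)
    (u : ℕ → ℤ → X) (x y : ℤ → X)
    (hu : ∀ k, B.mem (fun n => nn n (u k n)))
    (hTu : ∀ k, B.mem (fun n => nn n (u k n - A (n - 1) (u k (n - 1)))))
    (hx : B.mem (fun n => nn n (x n)))
    (hy : B.mem (fun n => nn n (y n)))
    (hconv : Filter.Tendsto (fun k => B.bnorm (fun n => nn n (u k n - x n)))
      Filter.atTop (nhds 0))
    (hTconv : Filter.Tendsto
      (fun k => B.bnorm (fun n => nn n (u k n - A (n - 1) (u k (n - 1)) - y n)))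
      Filter.atTop (nhds 0)) :
    ∀ n : ℤ, x n - A (n - 1) (x (n - 1)) = y n := by
  -- nonnegativity of nn
  have hnn0 : ∀ (n : ℤ) (v : X), 0 ≤ nn n v := by
    intro n v
    obtain ⟨c, C, hc, hC, h⟩ := heq n
    exact le_trans (mul_nonneg hc.le (norm_nonneg v)) (h v).1
  -- triangle for differences
  have hsub : ∀ (n : ℤ) (a b : X), nn n (a - b) ≤ nn n a + nn n b := by
    intro n a b
    calc nn n (a - b) = nn n (a + (-1 : ℝ) • b) := by rw [neg_one_smul, ← sub_eq_add_neg]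
    _ ≤ nn n a + nn n ((-1 : ℝ) • b) := hnadd n a _
    _ = nn n a + nn n b := by rw [hnsmul]; norm_num
  -- membership of the difference sequences
  have hmem1 : ∀ k, B.mem (fun n => nn n (u k n - x n)) := by
    intro k
    apply B.mono_mem (B.add_mem (hu k) hx)
    intro m
    rw [abs_of_nonneg (hnn0 _ _)]
    calc nn m (u k m - x m) ≤ nn m (u k m) + nn m (x m) := hsub m _ _
    _ ≤ |((fun n => nn n (u k n)) + fun n => nn n (x n)) m| := by
        rw [Pi.add_apply, abs_of_nonneg (add_nonneg (hnn0 _ _) (hnn0 _ _))]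
  have hmem2 : ∀ k, B.mem (fun n => nn n (u k n - A (n - 1) (u k (n - 1)) - y n)) := by
    intro k
    apply B.mono_mem (B.add_mem (hTu k) hy)
    intro m
    rw [abs_of_nonneg (hnn0 _ _)]
    calc nn m (u k m - A (m - 1) (u k (m - 1)) - y m)
        ≤ nn m (u k m - A (m - 1) (u k (m - 1))) + nn m (y m) := hsub m _ _
    _ ≤ |((fun n => nn n (u k n - A (n - 1) (u k (n - 1)))) + fun n => nn n (y n)) m| := by
        rw [Pi.add_apply, abs_of_nonneg (add_nonneg (hnn0 _ _) (hnn0 _ _))]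
  -- coordinate convergence in nn, then in norm
  have key : ∀ n : ℤ, Tendsto (fun k => u k n) atTop (nhds (x n)) := by
    intro n
    have h1 := coord_tendsto B _ (fun k m => hnn0 _ _) hmem1 hconv n
    rw [tendsto_iff_norm_sub_tendsto_zero]
    obtain ⟨c, C, hc, hC, h⟩ := heq n
    apply squeeze_zero (fun k => norm_nonneg _) (fun k => ?_) (by simpa using h1.const_mul c⁻¹)
    have := (h (u k n - x n)).1
    calc ‖u k n - x n‖ = c⁻¹ * (c * ‖u k n - x n‖) := by field_simp
    _ ≤ c⁻¹ * nn n (u k n - x n) :=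
        mul_le_mul_of_nonneg_left this (inv_pos.mpr hc).le
  have key2 : ∀ n : ℤ, Tendsto (fun k => u k n - A (n - 1) (u k (n - 1))) atTop (nhds (y n)) := by
    intro n
    have h1 := coord_tendsto B _ (fun k m => hnn0 _ _) hmem2 hTconv n
    rw [tendsto_iff_norm_sub_tendsto_zero]
    obtain ⟨c, C, hc, hC, h⟩ := heq n
    apply squeeze_zero (fun k => norm_nonneg _) (fun k => ?_) (by simpa using h1.const_mul c⁻¹)
    have := (h (u k n - A (n - 1) (u k (n - 1)) - y n)).1
    calc ‖u k n - A (n - 1) (u k (n - 1)) - y n‖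
        = c⁻¹ * (c * ‖u k n - A (n - 1) (u k (n - 1)) - y n‖) := by field_simp
    _ ≤ c⁻¹ * nn n (u k n - A (n - 1) (u k (n - 1)) - y n) :=
        mul_le_mul_of_nonneg_left this (inv_pos.mpr hc).le
  intro n
  have h3 : Tendsto (fun k => u k n - A (n - 1) (u k (n - 1))) atTop
      (nhds (x n - A (n - 1) (x (n - 1)))) :=
    (key n).sub (((A (n - 1)).continuous.tendsto _).comp (key (n - 1)))
  exact tendsto_nhds_unique h3 (key2 n)
end

section
/- Suppose the sequence (Aₘ)_{m∈ℤ} of bounded linear operators on a Banach space X admits an exponential dichotomy with respect to the sequence of norms ‖·‖ₘ, and let B be an admissible Banach sequence space. Then the operator T_B : D(T_B) ⊂ Y_B → Y_B, (T_B x)ₙ = xₙ − A_{n−1}x_{n−1}, is injective. -/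
/-- `opComp A k m` is the composition `A(m+k, m) = A_{m+k-1} ∘ ⋯ ∘ A_m`
(the identity when `k = 0`). -/
def opComp {X : Type*} [NormedAddCommGroup X] [NormedSpace ℝ X]
    (A : ℤ → X →L[ℝ] X) : ℕ → ℤ → X →L[ℝ] X
  | 0, _ => ContinuousLinearMap.id ℝ X
  | k + 1, m => (A (m + k)).comp (opComp A k m)


section Aux
variable {X : Type*} [NormedAddCommGroup X] [NormedSpace ℝ X]

lemma myOpComp_comm (A P : ℤ → X →L[ℝ] X)
    (hcomm : ∀ (m : ℤ) (v : X), A m (P m v) = P (m + 1) (A m v)) :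
    ∀ (k : ℕ) (m : ℤ) (v : X), opComp A k m (P m v) = P (m + k) (opComp A k m v) := by
  intro k
  induction k with
  | zero => intro m v; simp [opComp]
  | succ k ih =>
    intro m v
    show A (m + k) (opComp A k m (P m v)) = P (m + ((k : ℕ) + 1 : ℕ)) (A (m + k) (opComp A k m v))
    rw [ih, hcomm]
    congr 1
    push_cast
    ring

lemma myOpComp_ker (A P : ℤ → X →L[ℝ] X)
    (hcomm : ∀ (m : ℤ) (v : X), A m (P m v) = P (m + 1) (A m v))
    (k : ℕ) (m : ℤ) (v : X) (hv : P m v = 0) :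
    P (m + k) (opComp A k m v) = 0 := by
  rw [← myOpComp_comm A P hcomm, hv, map_zero]

lemma myOpComp_inj (A P : ℤ → X →L[ℝ] X)
    (hcomm : ∀ (m : ℤ) (v : X), A m (P m v) = P (m + 1) (A m v))
    (hbij : ∀ m : ℤ, Set.BijOn (A m) {v : X | P m v = 0} {v : X | P (m + 1) v = 0}) :
    ∀ (k : ℕ) (m : ℤ), Set.InjOn (opComp A k m) {v : X | P m v = 0} := by
  intro k
  induction k with
  | zero => intro m u _ v _ h; simpa [opComp] using h
  | succ k ih =>
    intro m u hu v hv h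
    have hu' : P (m + k) (opComp A k m u) = 0 := myOpComp_ker A P hcomm k m u hu
    have hv' : P (m + k) (opComp A k m v) = 0 := myOpComp_ker A P hcomm k m v hv
    have h' : A (m + k) (opComp A k m u) = A (m + k) (opComp A k m v) := h
    exact ih m hu hv ((hbij (m + k)).injOn hu' hv' h')

end Aux

/-- If `(Aₘ)` admits an exponential dichotomy with respect to the norms `nn m`, then the
operator `(T_B x)ₙ = xₙ - A_{n-1} x_{n-1}` on `Y_B` is injective. -/
theorem stmt8 (B : AdmissibleSeqSpace) {X : Type*} [NormedAddCommGroup X]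
    [NormedSpace ℝ X] [CompleteSpace X]
    (A : ℤ → X →L[ℝ] X)
    (nn : ℤ → X → ℝ)
    (hnadd : ∀ (n : ℤ) (u v : X), nn n (u + v) ≤ nn n u + nn n v)
    (hnsmul : ∀ (n : ℤ) (c : ℝ) (v : X), nn n (c • v) = |c| * nn n v)
    (heq : ∀ n : ℤ, ∃ c C : ℝ, 0 < c ∧ 0 < C ∧
      ∀ v : X, c * ‖v‖ ≤ nn n v ∧ nn n v ≤ C * ‖v‖)
    (P : ℤ → X →L[ℝ] X)
    (hproj : ∀ (m : ℤ) (v : X), P m (P m v) = P m v)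
    (hcomm : ∀ (m : ℤ) (v : X), A m (P m v) = P (m + 1) (A m v))
    (hbij : ∀ m : ℤ, Set.BijOn (A m) {v : X | P m v = 0} {v : X | P (m + 1) v = 0})
    (D lam mu : ℝ) (hD : 0 < D) (hlam0 : 0 < lam) (hlam1 : lam < 1) (hmu : 1 < mu)
    (hstable : ∀ (m : ℤ) (v : X) (k : ℕ),
      nn (m + k) (opComp A k m (P m v)) ≤ D * lam ^ k * nn m v)
    (Ainv : ℕ → ℤ → X → X)
    (hAinv_ker : ∀ (k : ℕ) (m : ℤ) (v : X), P m v = 0 → P (m - k) (Ainv k m v) = 0)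
    (hAinv_comp : ∀ (k : ℕ) (m : ℤ) (v : X), P m v = 0 → opComp A k (m - k) (Ainv k m v) = v)
    (hunstable : ∀ (k : ℕ) (m : ℤ) (v : X),
      nn (m - k) (Ainv k m (v - P m v)) ≤ D * (mu ^ k)⁻¹ * nn m v) :
    ∀ x1 x2 : ℤ → X, B.mem (fun n => nn n (x1 n)) → B.mem (fun n => nn n (x2 n)) →
      (∀ n : ℤ, x1 n - A (n - 1) (x1 (n - 1)) = x2 n - A (n - 1) (x2 (n - 1))) →
      x1 = x2 := by
  intro x1 x2 h1 h2 hT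
  set y := fun n => x1 n - x2 n with hy
  -- recursion for y
  have hrec : ∀ n : ℤ, y n = A (n - 1) (y (n - 1)) := by
    intro n
    have h := hT n
    rw [sub_eq_sub_iff_sub_eq_sub] at h
    simp only [hy, map_sub]
    exact h
  -- forward iteration
  have hiter : ∀ (m : ℤ) (k : ℕ), y (m + k) = opComp A k m (y m) := by
    intro m k
    induction k with
    | zero => simp [opComp]
    | succ k ih =>
      have e1 : m + ((k + 1 : ℕ) : ℤ) = (m + k) + 1 := by push_cast; ring
      rw [e1]
      have h := hrec (m + k + 1)
      rw [show m + (k : ℤ) + 1 - 1 = m + k by ring] at h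
      rw [h, ih]
      rfl
  -- nonnegativity of nn
  have hnn0 : ∀ (n : ℤ) (v : X), 0 ≤ nn n v := by
    intro n v
    obtain ⟨c, C, hc, hC, h⟩ := heq n
    have := (h v).1
    nlinarith [norm_nonneg v]
  have hnneg : ∀ (n : ℤ) (v : X), nn n (-v) = nn n v := by
    intro n v
    have := hnsmul n (-1) v
    simpa using this
  have hnsub : ∀ (n : ℤ) (u v : X), nn n (u - v) ≤ nn n u + nn n v := by
    intro n u v
    have h := hnadd n u (-v)
    rw [hnneg] at h
    simpa [sub_eq_add_neg] using h
  -- the sequence s of norms of y is in B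
  set s : ℤ → ℝ := fun n => nn n (y n) with hs
  have hsmem : B.mem s := by
    refine B.mono_mem (B.add_mem h1 h2) ?_
    intro n
    have h0 : 0 ≤ s n := hnn0 n (y n)
    have hb : s n ≤ nn n (x1 n) + nn n (x2 n) := hnsub n (x1 n) (x2 n)
    have h1' : 0 ≤ nn n (x1 n) := hnn0 n _
    have h2' : 0 ≤ nn n (x2 n) := hnn0 n _
    rw [abs_of_nonneg h0, Pi.add_apply, abs_of_nonneg (by linarith)]
    exact hb
  -- uniform bound on s
  set e0 : ℤ → ℝ := fun k => if k = (0 : ℤ) then (1 : ℝ) else 0 with he0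
  have he0pos : 0 < B.bnorm e0 := B.indicator_pos 0
  set M : ℝ := B.N * B.bnorm s / B.bnorm e0 with hM
  have hMbound : ∀ n : ℤ, s n ≤ M := by
    intro m
    set em : ℤ → ℝ := fun k => if k = m then (1 : ℝ) else 0 with hem
    have hempos : 0 < B.bnorm em := B.indicator_pos m
    have hb1 : B.bnorm (s m • em) ≤ B.bnorm s := by
      refine B.mono_norm hsmem ?_
      intro n
      by_cases h : n = m
      · subst h; simp [hem, abs_of_nonneg (hnn0 n (y n))]
      · simp [hem, h, abs_nonneg]
    rw [B.bnorm_smul, abs_of_nonneg (hnn0 m (y m))] at hb1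
    have hshift : B.bnorm e0 ≤ B.N * B.bnorm em := by
      have h := B.shift_norm (B.indicator_mem m) m
      have he : (fun n : ℤ => if n + m = m then (1 : ℝ) else 0) = e0 := by
        funext n
        by_cases h : n = 0
        · subst h; simp [he0]
        · have : n + m ≠ m := by omega
          simp [he0, this, h]
      rw [he] at h
      exact h
    have hs0 : 0 ≤ s m := hnn0 m (y m)
    have hsnorm0 : 0 ≤ B.bnorm s := B.bnorm_nonneg s
    rw [hM, le_div_iff₀ he0pos]
    nlinarith [B.N_pos]
  have hM0 : 0 ≤ M := le_trans (hnn0 0 (y 0)) (hMbound 0)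
  -- vanishing of the stable component
  have hPzero : ∀ m : ℤ, P m (y m) = 0 := by
    intro m
    have key : ∀ k : ℕ, nn m (P m (y m)) ≤ D * lam ^ k * M := by
      intro k
      have h1' : y m = opComp A k (m - k) (y (m - k)) := by
        have h := hiter (m - k) k
        rwa [show m - (k : ℤ) + k = m by ring] at h
      have h2' : P m (y m) = opComp A k (m - k) (P (m - k) (y (m - k))) := by
        conv_lhs => rw [h1']
        rw [myOpComp_comm A P hcomm k (m - k), show m - (k : ℤ) + k = m by ring]
      have h3 := hstable (m - k) (y (m - k)) k
      rw [show m - (k : ℤ) + k = m by ring] at h3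
      rw [h2']
      calc nn m (opComp A k (m - k) (P (m - k) (y (m - k))))
          ≤ D * lam ^ k * nn (m - k) (y (m - k)) := h3
        _ ≤ D * lam ^ k * M := by
            have h5 : nn (m - (k : ℤ)) (y (m - (k : ℤ))) ≤ M := hMbound (m - k)
            exact mul_le_mul_of_nonneg_left h5 (by positivity)
    have hlim : Filter.Tendsto (fun k : ℕ => D * lam ^ k * M) Filter.atTop (nhds 0) := by
      have h := tendsto_pow_atTop_nhds_zero_of_lt_one (le_of_lt hlam0) hlam1
      have h' := (h.const_mul D).mul_const M
      simpa using h'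
    have hle : nn m (P m (y m)) ≤ 0 := ge_of_tendsto' hlim key
    have h0 : nn m (P m (y m)) = 0 := le_antisymm hle (hnn0 m _)
    obtain ⟨c, C, hc, hC, hcc⟩ := heq m
    have := (hcc (P m (y m))).1
    have : ‖P m (y m)‖ = 0 := by nlinarith [norm_nonneg (P m (y m))]
    exact norm_eq_zero.mp this
  -- vanishing of y itself
  have hy0 : ∀ m : ℤ, y m = 0 := by
    intro m
    have key : ∀ k : ℕ, nn m (y m) ≤ D * (mu ^ k)⁻¹ * M := by
      intro k
      have hw : P (m + k) (y (m + k)) = 0 := hPzero _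
      have hz1 : P (m + k - k) (Ainv k (m + k) (y (m + k))) = 0 :=
        hAinv_ker k (m + k) (y (m + k)) hw
      have hz2 : opComp A k (m + k - k) (Ainv k (m + k) (y (m + k))) = y (m + k) :=
        hAinv_comp k (m + k) (y (m + k)) hw
      rw [show m + (k : ℤ) - k = m by ring] at hz1 hz2
      have hy1 : opComp A k m (y m) = y (m + k) := (hiter m k).symm
      have hzy : Ainv k (m + k) (y (m + k)) = y m :=
        myOpComp_inj A P hcomm hbij k m hz1 (hPzero m) (hz2.trans hy1.symm)
      have h4 := hunstable k (m + k) (y (m + k))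
      rw [hw, sub_zero, hzy, show m + (k : ℤ) - k = m by ring] at h4
      calc nn m (y m) ≤ D * (mu ^ k)⁻¹ * nn (m + k) (y (m + k)) := h4
        _ ≤ D * (mu ^ k)⁻¹ * M := by
            have h5 : nn (m + (k : ℤ)) (y (m + (k : ℤ))) ≤ M := hMbound (m + k)
            have hmu0 : (0 : ℝ) < mu := lt_trans one_pos hmu
            exact mul_le_mul_of_nonneg_left h5 (by positivity)
    have hlim : Filter.Tendsto (fun k : ℕ => D * (mu ^ k)⁻¹ * M) Filter.atTop (nhds 0) := by
      have hmu0 : (0 : ℝ) < mu := lt_trans one_pos hmu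
      have hinv : mu⁻¹ < 1 := inv_lt_one_of_one_lt₀ hmu
      have h := tendsto_pow_atTop_nhds_zero_of_lt_one (le_of_lt (inv_pos.mpr hmu0)) hinv
      have h' := (h.const_mul D).mul_const M
      simp only [inv_pow] at h' ⊢
      simpa using h'
    have hle : nn m (y m) ≤ 0 := ge_of_tendsto' hlim key
    have h0 : nn m (y m) = 0 := le_antisymm hle (hnn0 m _)
    obtain ⟨c, C, hc, hC, hcc⟩ := heq m
    have := (hcc (y m)).1
    have : ‖y m‖ = 0 := by nlinarith [norm_nonneg (y m)]
    exact norm_eq_zero.mp this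
  funext n
  have h := hy0 n
  simp only [hy] at h
  exact sub_eq_zero.mp h
end

section
/- Suppose the sequence (Aₘ)_{m∈ℤ} of bounded linear operators on a Banach space X admits an exponential dichotomy with respect to the sequence of norms ‖·‖ₘ, and let B be an admissible Banach sequence space. Then the operator T_B : D(T_B) ⊂ Y_B → Y_B, (T_B x)ₙ = xₙ − A_{n−1}x_{n−1}, is surjective: for every y ∈ Y_B the sequence x given by xₙ = Σ_{m≥0} A(n, n−m)P_{n−m}y_{n−m} − Σ_{m≥1} A(n, n+m)Q_{n+m}y_{n+m} lies in Y_B and satisfies T_B x = y. -/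
open Filter Topology

namespace BanachSeqSpace

variable (B : BanachSeqSpace) {s t : ℤ → ℝ}

lemma bnorm_zero : B.bnorm 0 = 0 :=
  (B.bnorm_eq_zero B.zero_mem).mpr rfl

lemma mem_sub (hs : B.mem s) (ht : B.mem t) : B.mem (s - t) := by
  simpa [sub_eq_add_neg] using B.add_mem hs (B.smul_mem (-1) ht)

lemma bnorm_sub_comm (s t : ℤ → ℝ) : B.bnorm (s - t) = B.bnorm (t - s) := by
  simpa using B.bnorm_smul (-1) (t - s)

lemma mem_of_nonneg_of_le (ht : B.mem t) (hs0 : ∀ n, 0 ≤ s n) (hst : ∀ n, s n ≤ t n) :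
    B.mem s :=
  B.mono_mem ht fun n => by
    rw [abs_of_nonneg (hs0 n), abs_of_nonneg ((hs0 n).trans (hst n))]; exact hst n

lemma mem_sum {ι : Type*} {f : ι → ℤ → ℝ} {F : Finset ι} (hf : ∀ i ∈ F, B.mem (f i)) :
    B.mem (∑ i ∈ F, f i) := by
  classical
  induction F using Finset.induction_on with
  | empty => simpa using B.zero_mem
  | insert j F hj ih =>
    rw [Finset.sum_insert hj]
    exact B.add_mem (hf j (F.mem_insert_self j)) (ih fun i hi => hf i (Finset.mem_insert_of_mem hi))

lemma bnorm_sum_le {ι : Type*} {f : ι → ℤ → ℝ} {F : Finset ι} (hf : ∀ i ∈ F, B.mem (f i)) :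
    B.bnorm (∑ i ∈ F, f i) ≤ ∑ i ∈ F, B.bnorm (f i) :=
  Finset.le_sum_of_subadditive_on_pred B.bnorm B.mem B.bnorm_zero.le
    (fun _ _ => B.bnorm_add_le) (fun _ _ => B.add_mem) f hf

lemma bnorm_sum_range_sub_lt {f : ℕ → ℤ → ℝ} (hf : ∀ m, B.mem (f m))
    (hsum : Summable fun m => B.bnorm (f m)) {ε : ℝ} (hε : 0 < ε) :
    ∃ K : ℕ, ∀ k l, K ≤ k → K ≤ l →
      B.bnorm (∑ m ∈ Finset.range k, f m - ∑ m ∈ Finset.range l, f m) < ε := by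
  obtain ⟨K, hK⟩ := Metric.cauchySeq_iff'.mp hsum.hasSum.tendsto_sum_nat.cauchySeq ε hε
  have key : ∀ k l, K ≤ l → l ≤ k →
      B.bnorm (∑ m ∈ Finset.range k, f m - ∑ m ∈ Finset.range l, f m) < ε := by
    intro k l hl hlk
    rw [← Finset.sum_Ico_eq_sub _ hlk]
    calc B.bnorm (∑ m ∈ Finset.Ico l k, f m)
        ≤ ∑ m ∈ Finset.Ico l k, B.bnorm (f m) := B.bnorm_sum_le fun m _ => hf m
      _ ≤ dist (∑ m ∈ Finset.range k, B.bnorm (f m)) (∑ m ∈ Finset.range K, B.bnorm (f m)) := by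
        rw [Real.dist_eq, ← Finset.sum_Ico_eq_sub _ (hl.trans hlk)]
        refine le_trans ?_ (le_abs_self _)
        exact Finset.sum_le_sum_of_subset_of_nonneg (Finset.Ico_subset_Ico_left hl)
          fun m _ _ => B.bnorm_nonneg _
      _ < ε := hK k (hl.trans hlk)
  refine ⟨K, fun k l hk hl => ?_⟩
  rcases le_total l k with hlk | hkl
  · exact key k l hl hlk
  · rw [bnorm_sub_comm]; exact key l k hk hkl

end BanachSeqSpace

namespace AdmissibleSeqSpace

variable (B : AdmissibleSeqSpace)

-- `|s n| ‖e_n‖ ≤ ‖s‖` by monotonicity, and `‖e_0‖ ≤ N ‖e_n‖` because `e_0` is a shift of `e_n`.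
lemma exists_abs_apply_le_bnorm :
    ∃ K > 0, ∀ s, B.mem s → ∀ n, |s n| ≤ K * B.bnorm s := by
  set e : ℤ → ℤ → ℝ := fun n k => if k = n then 1 else 0
  refine ⟨B.N / B.bnorm (e 0), div_pos B.N_pos (B.indicator_pos 0), fun s hs n => ?_⟩
  have hsn : |s n| * B.bnorm (e n) ≤ B.bnorm s := by
    rw [← B.bnorm_smul]
    refine B.mono_norm hs fun k => ?_
    by_cases hk : k = n <;> simp [e, hk]
  have he : B.bnorm (e 0) ≤ B.N * B.bnorm (e n) := by
    have hshift : (fun k => e n (k + n)) = e 0 := by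
      funext k; simp [e]
    simpa [hshift] using B.shift_norm (B.indicator_mem n) n
  rw [div_mul_eq_mul_div, le_div_iff₀ (B.indicator_pos 0)]
  have hN := B.N_pos.le
  calc |s n| * B.bnorm (e 0) ≤ |s n| * (B.N * B.bnorm (e n)) := by gcongr
    _ = B.N * (|s n| * B.bnorm (e n)) := by ring
    _ ≤ B.N * B.bnorm s := by gcongr

lemma tendsto_apply_of_bnorm_sub {u : ℕ → ℤ → ℝ} {t : ℤ → ℝ} (hu : ∀ k, B.mem (u k))
    (ht : B.mem t) (hut : ∀ ε > 0, ∃ K : ℕ, ∀ k, K ≤ k → B.bnorm (u k - t) < ε) (n : ℤ) :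
    Tendsto (fun k => u k n) atTop (𝓝 (t n)) := by
  obtain ⟨C, hC, hCs⟩ := B.exists_abs_apply_le_bnorm
  refine Metric.tendsto_atTop.mpr fun ε hε => ?_
  obtain ⟨K, hK⟩ := hut (ε / C) (div_pos hε hC)
  refine ⟨K, fun k hk => ?_⟩
  calc dist (u k n) (t n) = |(u k - t) n| := Real.dist_eq _ _
    _ ≤ C * B.bnorm (u k - t) := hCs _ (B.mem_sub (hu k) ht) n
    _ < C * (ε / C) := by gcongr; exact hK k hk
    _ = ε := mul_div_cancel₀ _ hC.ne'

lemma exists_mem_hasSum_apply {f : ℕ → ℤ → ℝ} (hf : ∀ m, B.mem (f m))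
    (hsum : Summable fun m => B.bnorm (f m)) :
    ∃ t, B.mem t ∧ ∀ n, HasSum (fun m => f m n) (t n) := by
  obtain ⟨C, -, hCs⟩ := B.exists_abs_apply_le_bnorm
  have hu : ∀ k, B.mem (∑ m ∈ Finset.range k, f m) := fun k => B.mem_sum fun m _ => hf m
  obtain ⟨t, ht, hut⟩ := B.complete _ hu fun ε hε => B.bnorm_sum_range_sub_lt hf hsum hε
  refine ⟨t, ht, fun n => (hasSum_iff_tendsto_nat_of_summable_norm ?_).mpr ?_⟩
  · exact (hsum.mul_left C).of_nonneg_of_le (fun m => norm_nonneg _) fun m => hCs _ (hf m) n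
  · simpa only [Finset.sum_apply] using B.tendsto_apply_of_bnorm_sub hu ht hut n

lemma exists_mem_hasSum_mul_shift {s : ℤ → ℝ} (hs : B.mem s) {a : ℕ → ℝ} (ha : Summable a)
    (σ : ℕ → ℤ) : ∃ t, B.mem t ∧ ∀ n, HasSum (fun m => a m * s (n + σ m)) (t n) := by
  have hmem : ∀ m, B.mem (a m • fun n => s (n + σ m)) :=
    fun m => B.smul_mem _ (B.shift_mem hs _)
  refine B.exists_mem_hasSum_apply hmem ?_
  refine (ha.abs.mul_right (B.N * B.bnorm s)).of_nonneg_of_le (fun m => B.bnorm_nonneg _)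
    fun m => ?_
  exact (B.bnorm_smul (a m) _).trans_le
    (mul_le_mul_of_nonneg_left (B.shift_norm hs _) (abs_nonneg _))

end AdmissibleSeqSpace

namespace Seminorm

variable {X : Type*} [NormedAddCommGroup X] [NormedSpace ℝ X] {p : Seminorm ℝ X}

lemma continuous_of_le_mul_norm {C : ℝ} (hC : ∀ v, p v ≤ C * ‖v‖) : Continuous p := by
  refine (LipschitzWith.of_dist_le_mul (K := C.toNNReal) fun u v => ?_).continuous
  rw [Real.dist_eq, dist_eq_norm, Real.coe_toNNReal']
  calc |p u - p v| ≤ p (u - v) := abs_sub_map_le_sub p u v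
    _ ≤ C * ‖u - v‖ := hC _
    _ ≤ max C 0 * ‖u - v‖ := by gcongr; exact le_max_left _ _

lemma le_of_hasSum {ι : Type*} (hp : Continuous p) {f : ι → X} {x : X} (hf : HasSum f x)
    {b : ι → ℝ} {β : ℝ} (hb : HasSum b β) (hfb : ∀ i, p (f i) ≤ b i) : p x ≤ β :=
  le_of_tendsto_of_tendsto' ((hp.tendsto x).comp hf) hb fun F =>
    (Finset.le_sum_of_subadditive p (map_zero p).le (map_add_le_add p) F f).trans
      (Finset.sum_le_sum fun i _ => hfb i)

lemma summable_of_le [CompleteSpace X] {c : ℝ} (hc : 0 < c) (hpc : ∀ v, c * ‖v‖ ≤ p v)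
    {ι : Type*} {f : ι → X} {b : ι → ℝ} (hb : Summable b) (hfb : ∀ i, p (f i) ≤ b i) :
    Summable f :=
  (hb.mul_left c⁻¹).of_norm_bounded fun i => (le_inv_mul_iff₀ hc).mpr ((hpc _).trans (hfb i))

end Seminorm

lemma AdmissibleSeqSpace.summable_and_exists_mem_seminorm_tsum_le (B : AdmissibleSeqSpace)
    {X : Type*} [NormedAddCommGroup X] [NormedSpace ℝ X] [CompleteSpace X]
    (p : ℤ → Seminorm ℝ X)
    (hequiv : ∀ n, ∃ c C : ℝ, 0 < c ∧ 0 < C ∧ ∀ v, c * ‖v‖ ≤ p n v ∧ p n v ≤ C * ‖v‖)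
    {s : ℤ → ℝ} (hs : B.mem s) {a : ℕ → ℝ} (ha : Summable a) (σ : ℕ → ℤ)
    (F : ℤ → ℕ → X) (hF : ∀ n m, p n (F n m) ≤ a m * s (n + σ m)) :
    (∀ n, Summable (F n)) ∧ ∃ t, B.mem t ∧ ∀ n, p n (∑' m, F n m) ≤ t n := by
  obtain ⟨t, ht, hst⟩ := B.exists_mem_hasSum_mul_shift hs ha σ
  have hsum : ∀ n, Summable (F n) := fun n => by
    obtain ⟨c, _, hc, -, hcC⟩ := hequiv n
    exact (p n).summable_of_le hc (fun v => (hcC v).1) (hst n).summable (hF n)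
  refine ⟨hsum, t, ht, fun n => ?_⟩
  obtain ⟨_, C, -, -, hcC⟩ := hequiv n
  exact (p n).le_of_hasSum ((p n).continuous_of_le_mul_norm fun v => (hcC v).2)
    (hsum n).hasSum (hst n) (hF n)

section Dichotomy

variable {X : Type*} [NormedAddCommGroup X] [NormedSpace ℝ X] (A P : ℤ → X →L[ℝ] X)

lemma opComp_succ_apply' (k : ℕ) (m : ℤ) (v : X) :
    opComp A (k + 1) m v = opComp A k (m + 1) (A m v) := by
  induction k generalizing m with
  | zero => simp [opComp]
  | succ k ih =>
    change A (m + (k + 1 : ℕ)) (opComp A (k + 1) m v) = A (m + 1 + k) (opComp A k (m + 1) (A m v))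
    rw [ih]
    push_cast
    ring_nf

variable {A P}

lemma opComp_apply_eq_zero (hcomm : ∀ m v, A m (P m v) = P (m + 1) (A m v)) (k : ℕ) {m : ℤ}
    {v : X} (hv : P m v = 0) : P (m + k) (opComp A k m v) = 0 := by
  induction k with
  | zero => simpa [opComp] using hv
  | succ k ih =>
    have h := hcomm (m + k) (opComp A k m v)
    rw [ih, map_zero] at h
    rw [Nat.cast_succ, ← add_assoc]
    exact h.symm

lemma opComp_injOn (hcomm : ∀ m v, A m (P m v) = P (m + 1) (A m v))
    (hinj : ∀ m, Set.InjOn (A m) {v | P m v = 0}) (k : ℕ) (m : ℤ) :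
    Set.InjOn (opComp A k m) {v | P m v = 0} := by
  induction k with
  | zero => exact Function.injective_id.injOn
  | succ k ih =>
    intro u hu v hv huv
    exact ih hu hv (hinj (m + k) (opComp_apply_eq_zero hcomm k hu)
      (opComp_apply_eq_zero hcomm k hv) huv)

lemma map_sub_map_self_eq_zero {f : X →L[ℝ] X} (hf : ∀ v, f (f v) = f v) (v : X) :
    f (v - f v) = 0 := by
  rw [map_sub, hf, sub_self]

variable {Ainv : ℕ → ℤ → X → X}

lemma map_Ainv_succ (hcomm : ∀ m v, A m (P m v) = P (m + 1) (A m v))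
    (hinj : ∀ m, Set.InjOn (A m) {v | P m v = 0})
    (hAinv_ker : ∀ (k : ℕ) (m : ℤ) (v : X), P m v = 0 → P (m - k) (Ainv k m v) = 0)
    (hAinv_comp : ∀ (k : ℕ) (m : ℤ) (v : X), P m v = 0 → opComp A k (m - k) (Ainv k m v) = v)
    (k : ℕ) {m : ℤ} {v : X} (hv : P m v = 0) :
    A (m - (k + 1 : ℕ)) (Ainv (k + 1) m v) = Ainv k m v := by
  have hshift : m - ((k + 1 : ℕ) : ℤ) + 1 = m - k := by push_cast; ring
  have hker : P (m - k) (A (m - (k + 1 : ℕ)) (Ainv (k + 1) m v)) = 0 := by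
    rw [← hshift, ← hcomm, hAinv_ker (k + 1) m v hv, map_zero]
  refine opComp_injOn hcomm hinj k (m - k) hker (hAinv_ker k m v hv) ?_
  calc opComp A k (m - k) (A (m - (k + 1 : ℕ)) (Ainv (k + 1) m v))
      = opComp A (k + 1) (m - (k + 1 : ℕ)) (Ainv (k + 1) m v) := by
        rw [opComp_succ_apply', hshift]
    _ = v := hAinv_comp (k + 1) m v hv
    _ = opComp A k (m - k) (Ainv k m v) := (hAinv_comp k m v hv).symm

variable (A P Ainv)

/-- The terms `A(n, n-m) P_{n-m} y_{n-m}` and `A(n, n+k) Q_{n+k} y_{n+k}` of the two series;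
`Ainv k m` plays the role of `A(m-k, m)`, the inverse of `A(m, m-k)` on `ker P`. -/
def stableTerm (y : ℤ → X) (n : ℤ) (m : ℕ) : X :=
  opComp A m (n - m) (P (n - m) (y (n - m)))

def unstableTerm (y : ℤ → X) (n : ℤ) (k : ℕ) : X :=
  Ainv k (n + k) (y (n + k) - P (n + k) (y (n + k)))

/-- The candidate preimage `x` of `y` under `T_B`. -/
noncomputable def dichotomySol (y : ℤ → X) (n : ℤ) : X :=
  ∑' m, stableTerm A P y n m - ∑' m, unstableTerm P Ainv y n (m + 1)

variable {A P Ainv}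

lemma stableTerm_zero (y : ℤ → X) (n : ℤ) : stableTerm A P y n 0 = P n (y n) := by
  simp [stableTerm, opComp]

lemma map_stableTerm (y : ℤ → X) (n : ℤ) (m : ℕ) :
    A (n - 1) (stableTerm A P y (n - 1) m) = stableTerm A P y n (m + 1) := by
  have h : n - ((m + 1 : ℕ) : ℤ) = n - 1 - m := by push_cast; ring
  rw [stableTerm, stableTerm, h]
  change _ = A (n - 1 - m + m) _
  rw [sub_add_cancel]
  rfl

lemma unstableTerm_zero (hproj : ∀ m v, P m (P m v) = P m v)
    (hAinv_comp : ∀ (k : ℕ) (m : ℤ) (v : X), P m v = 0 → opComp A k (m - k) (Ainv k m v) = v)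
    (y : ℤ → X) (n : ℤ) : unstableTerm P Ainv y n 0 = y n - P n (y n) := by
  simpa [unstableTerm, opComp] using
    hAinv_comp 0 n _ (map_sub_map_self_eq_zero (hproj n) (y n))

lemma map_unstableTerm (hcomm : ∀ m v, A m (P m v) = P (m + 1) (A m v))
    (hinj : ∀ m, Set.InjOn (A m) {v | P m v = 0}) (hproj : ∀ m v, P m (P m v) = P m v)
    (hAinv_ker : ∀ (k : ℕ) (m : ℤ) (v : X), P m v = 0 → P (m - k) (Ainv k m v) = 0)
    (hAinv_comp : ∀ (k : ℕ) (m : ℤ) (v : X), P m v = 0 → opComp A k (m - k) (Ainv k m v) = v)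
    (y : ℤ → X) (n : ℤ) (m : ℕ) :
    A (n - 1) (unstableTerm P Ainv y (n - 1) (m + 1)) = unstableTerm P Ainv y n m := by
  have h : n - 1 + ((m + 1 : ℕ) : ℤ) = n + m := by push_cast; ring
  have h' : n + (m : ℤ) - ((m + 1 : ℕ) : ℤ) = n - 1 := by push_cast; ring
  rw [unstableTerm, h, ← h']
  exact map_Ainv_succ hcomm hinj hAinv_ker hAinv_comp m
    (map_sub_map_self_eq_zero (hproj _) _)

lemma tsum_stableTerm {y : ℤ → X} {n : ℤ} (hsum : Summable (stableTerm A P y (n - 1))) :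
    ∑' m, stableTerm A P y n m = A (n - 1) (∑' m, stableTerm A P y (n - 1) m) + P n (y n) := by
  have h := hsum.hasSum.mapL (A (n - 1))
  simp only [map_stableTerm] at h
  simpa [stableTerm_zero] using ((hasSum_nat_add_iff 1).mp h).tsum_eq

lemma map_tsum_unstableTerm (hcomm : ∀ m v, A m (P m v) = P (m + 1) (A m v))
    (hinj : ∀ m, Set.InjOn (A m) {v | P m v = 0}) (hproj : ∀ m v, P m (P m v) = P m v)
    (hAinv_ker : ∀ (k : ℕ) (m : ℤ) (v : X), P m v = 0 → P (m - k) (Ainv k m v) = 0)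
    (hAinv_comp : ∀ (k : ℕ) (m : ℤ) (v : X), P m v = 0 → opComp A k (m - k) (Ainv k m v) = v)
    {y : ℤ → X} {n : ℤ} (hsum : Summable fun m => unstableTerm P Ainv y (n - 1) (m + 1)) :
    A (n - 1) (∑' m, unstableTerm P Ainv y (n - 1) (m + 1)) =
      (y n - P n (y n)) + ∑' m, unstableTerm P Ainv y n (m + 1) := by
  have h := hsum.hasSum.mapL (A (n - 1))
  simp only [map_unstableTerm hcomm hinj hproj hAinv_ker hAinv_comp] at h
  rw [((hasSum_nat_add_iff' 1).mpr h).tsum_eq, Finset.sum_range_one,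
    unstableTerm_zero hproj hAinv_comp]
  abel

lemma dichotomySol_sub_map (hcomm : ∀ m v, A m (P m v) = P (m + 1) (A m v))
    (hinj : ∀ m, Set.InjOn (A m) {v | P m v = 0}) (hproj : ∀ m v, P m (P m v) = P m v)
    (hAinv_ker : ∀ (k : ℕ) (m : ℤ) (v : X), P m v = 0 → P (m - k) (Ainv k m v) = 0)
    (hAinv_comp : ∀ (k : ℕ) (m : ℤ) (v : X), P m v = 0 → opComp A k (m - k) (Ainv k m v) = v)
    {y : ℤ → X} {n : ℤ} (hs : Summable (stableTerm A P y (n - 1)))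
    (hu : Summable fun m => unstableTerm P Ainv y (n - 1) (m + 1)) :
    dichotomySol A P Ainv y n - A (n - 1) (dichotomySol A P Ainv y (n - 1)) = y n := by
  rw [dichotomySol, dichotomySol, map_sub, tsum_stableTerm hs,
    map_tsum_unstableTerm hcomm hinj hproj hAinv_ker hAinv_comp hu]
  abel

lemma seminorm_stableTerm_le (p : ℤ → Seminorm ℝ X) {D lam : ℝ}
    (hstable : ∀ (m : ℤ) (v : X) (k : ℕ),
      p (m + k) (opComp A k m (P m v)) ≤ D * lam ^ k * p m v)
    (y : ℤ → X) (n : ℤ) (m : ℕ) :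
    p n (stableTerm A P y n m) ≤ D * lam ^ m * p (n - m) (y (n - m)) := by
  simpa [stableTerm] using hstable (n - m) (y (n - m)) m

lemma seminorm_unstableTerm_le (p : ℤ → Seminorm ℝ X) {D mu : ℝ}
    (hunstable : ∀ (k : ℕ) (m : ℤ) (v : X),
      p (m - k) (Ainv k m (v - P m v)) ≤ D * (mu ^ k)⁻¹ * p m v)
    (y : ℤ → X) (n : ℤ) (k : ℕ) :
    p n (unstableTerm P Ainv y n k) ≤ D * (mu ^ k)⁻¹ * p (n + k) (y (n + k)) := by
  simpa [unstableTerm] using hunstable k (n + k) (y (n + k))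

end Dichotomy

theorem stmt9_general (B : AdmissibleSeqSpace) {X : Type*} [NormedAddCommGroup X]
    [NormedSpace ℝ X] [CompleteSpace X]
    (A : ℤ → X →L[ℝ] X)
    (nn : ℤ → X → ℝ)
    (hnadd : ∀ (n : ℤ) (u v : X), nn n (u + v) ≤ nn n u + nn n v)
    (hnsmul : ∀ (n : ℤ) (c : ℝ) (v : X), nn n (c • v) = |c| * nn n v)
    (heq : ∀ n : ℤ, ∃ c C : ℝ, 0 < c ∧ 0 < C ∧
      ∀ v : X, c * ‖v‖ ≤ nn n v ∧ nn n v ≤ C * ‖v‖)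
    (P : ℤ → X →L[ℝ] X)
    (hproj : ∀ (m : ℤ) (v : X), P m (P m v) = P m v)
    (hcomm : ∀ (m : ℤ) (v : X), A m (P m v) = P (m + 1) (A m v))
    (hbij : ∀ m : ℤ, Set.BijOn (A m) {v : X | P m v = 0} {v : X | P (m + 1) v = 0})
    (D lam mu : ℝ) (hlam0 : 0 < lam) (hlam1 : lam < 1) (hmu : 1 < mu)
    (hstable : ∀ (m : ℤ) (v : X) (k : ℕ),
      nn (m + k) (opComp A k m (P m v)) ≤ D * lam ^ k * nn m v)
    (Ainv : ℕ → ℤ → X → X)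
    (hAinv_ker : ∀ (k : ℕ) (m : ℤ) (v : X), P m v = 0 → P (m - k) (Ainv k m v) = 0)
    (hAinv_comp : ∀ (k : ℕ) (m : ℤ) (v : X), P m v = 0 → opComp A k (m - k) (Ainv k m v) = v)
    (hunstable : ∀ (k : ℕ) (m : ℤ) (v : X),
      nn (m - k) (Ainv k m (v - P m v)) ≤ D * (mu ^ k)⁻¹ * nn m v) :
    ∀ y : ℤ → X, B.mem (fun n => nn n (y n)) →
      B.mem (fun n => nn n
        ((∑' m : ℕ, opComp A m (n - m) (P (n - m) (y (n - m)))) -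
          ∑' m : ℕ, Ainv (m + 1) (n + (m + 1))
            (y (n + (m + 1)) - P (n + (m + 1)) (y (n + (m + 1)))))) ∧
      ∀ n : ℤ,
        ((∑' m : ℕ, opComp A m (n - m) (P (n - m) (y (n - m)))) -
          ∑' m : ℕ, Ainv (m + 1) (n + (m + 1))
            (y (n + (m + 1)) - P (n + (m + 1)) (y (n + (m + 1))))) -
        A (n - 1)
          ((∑' m : ℕ, opComp A m (n - 1 - m) (P (n - 1 - m) (y (n - 1 - m)))) -
            ∑' m : ℕ, Ainv (m + 1) (n - 1 + (m + 1))
              (y (n - 1 + (m + 1)) - P (n - 1 + (m + 1)) (y (n - 1 + (m + 1))))) =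
        y n := by
  intro y hy
  let p : ℤ → Seminorm ℝ X := fun n =>
    Seminorm.of (nn n) (hnadd n) fun c v => by rw [Real.norm_eq_abs, hnsmul]
  have hinj : ∀ m, Set.InjOn (A m) {v | P m v = 0} := fun m => (hbij m).injOn
  have hgeom_lam : Summable fun m : ℕ => D * lam ^ m :=
    (summable_geometric_of_lt_one hlam0.le hlam1).mul_left D
  have hgeom_mu : Summable fun m : ℕ => D * (mu ^ (m + 1))⁻¹ := by
    simp_rw [← inv_pow]
    exact (summable_nat_add_iff 1).mpr
      ((summable_geometric_of_lt_one (by positivity) (inv_lt_one_of_one_lt₀ hmu)).mul_left D)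
  obtain ⟨hsum_s, t₁, ht₁, hle₁⟩ := B.summable_and_exists_mem_seminorm_tsum_le p heq hy
    hgeom_lam (fun m => -m) (stableTerm A P y) fun n m => by
      rw [← sub_eq_add_neg]; exact seminorm_stableTerm_le p hstable y n m
  obtain ⟨hsum_u, t₂, ht₂, hle₂⟩ := B.summable_and_exists_mem_seminorm_tsum_le p heq hy
    hgeom_mu (fun m => (m + 1 : ℕ)) (fun n m => unstableTerm P Ainv y n (m + 1)) fun n m =>
      seminorm_unstableTerm_le p hunstable y n (m + 1)
  refine ⟨B.mem_of_nonneg_of_le (B.add_mem ht₁ ht₂) (fun n => apply_nonneg (p n) _) fun n =>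
      (map_sub_le_add (p n) _ _).trans (add_le_add (hle₁ n) (hle₂ n)), fun n =>
    dichotomySol_sub_map hcomm hinj hproj hAinv_ker hAinv_comp (hsum_s (n - 1)) (hsum_u (n - 1))⟩

/-- If `(Aₘ)` admits an exponential dichotomy with respect to the norms `nn m`, then `T_B`
is surjective: for every `y ∈ Y_B` the sequence
`xₙ = Σ_{m≥0} A(n,n-m) P_{n-m} y_{n-m} - Σ_{m≥1} A(n,n+m) Q_{n+m} y_{n+m}`
lies in `Y_B` and satisfies `T_B x = y`. -/
theorem stmt9 (B : AdmissibleSeqSpace) {X : Type*} [NormedAddCommGroup X]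
    [NormedSpace ℝ X] [CompleteSpace X]
    (A : ℤ → X →L[ℝ] X)
    (nn : ℤ → X → ℝ)
    (hnadd : ∀ (n : ℤ) (u v : X), nn n (u + v) ≤ nn n u + nn n v)
    (hnsmul : ∀ (n : ℤ) (c : ℝ) (v : X), nn n (c • v) = |c| * nn n v)
    (heq : ∀ n : ℤ, ∃ c C : ℝ, 0 < c ∧ 0 < C ∧
      ∀ v : X, c * ‖v‖ ≤ nn n v ∧ nn n v ≤ C * ‖v‖)
    (P : ℤ → X →L[ℝ] X)
    (hproj : ∀ (m : ℤ) (v : X), P m (P m v) = P m v)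
    (hcomm : ∀ (m : ℤ) (v : X), A m (P m v) = P (m + 1) (A m v))
    (hbij : ∀ m : ℤ, Set.BijOn (A m) {v : X | P m v = 0} {v : X | P (m + 1) v = 0})
    (D lam mu : ℝ) (hD : 0 < D) (hlam0 : 0 < lam) (hlam1 : lam < 1) (hmu : 1 < mu)
    (hstable : ∀ (m : ℤ) (v : X) (k : ℕ),
      nn (m + k) (opComp A k m (P m v)) ≤ D * lam ^ k * nn m v)
    (Ainv : ℕ → ℤ → X → X)
    (hAinv_ker : ∀ (k : ℕ) (m : ℤ) (v : X), P m v = 0 → P (m - k) (Ainv k m v) = 0)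
    (hAinv_comp : ∀ (k : ℕ) (m : ℤ) (v : X), P m v = 0 → opComp A k (m - k) (Ainv k m v) = v)
    (hunstable : ∀ (k : ℕ) (m : ℤ) (v : X),
      nn (m - k) (Ainv k m (v - P m v)) ≤ D * (mu ^ k)⁻¹ * nn m v) :
    ∀ y : ℤ → X, B.mem (fun n => nn n (y n)) →
      B.mem (fun n => nn n
        ((∑' m : ℕ, opComp A m (n - m) (P (n - m) (y (n - m)))) -
          ∑' m : ℕ, Ainv (m + 1) (n + (m + 1))
            (y (n + (m + 1)) - P (n + (m + 1)) (y (n + (m + 1)))))) ∧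
      ∀ n : ℤ,
        ((∑' m : ℕ, opComp A m (n - m) (P (n - m) (y (n - m)))) -
          ∑' m : ℕ, Ainv (m + 1) (n + (m + 1))
            (y (n + (m + 1)) - P (n + (m + 1)) (y (n + (m + 1))))) -
        A (n - 1)
          ((∑' m : ℕ, opComp A m (n - 1 - m) (P (n - 1 - m) (y (n - 1 - m)))) -
            ∑' m : ℕ, Ainv (m + 1) (n - 1 + (m + 1))
              (y (n - 1 + (m + 1)) - P (n - 1 + (m + 1)) (y (n - 1 + (m + 1))))) =
        y n :=
  stmt9_general B A nn hnadd hnsmul heq P hproj hcomm hbij D lam mu hlam0 hlam1 hmu hstable Ainv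
    hAinv_ker hAinv_comp hunstable
end

section
/- Let B be an admissible Banach sequence space, X a Banach space with a sequence of equivalent norms ‖·‖ₙ, and (Aₘ)_{m∈ℤ} bounded linear operators on X. If the operator T_B : D(T_B) ⊂ Y_B → Y_B, (T_B x)ₙ = xₙ − A_{n−1}x_{n−1}, is bijective, then for each n ∈ ℤ, X decomposes as the direct sum X = X(n) ⊕ Z(n), where X(n) is the set of x ∈ X admitting a sequence x ∈ Y_B with xₙ = x and xₘ = A_{m−1}x_{m−1} for m > n, and Z(n) is the set of x ∈ X admitting z ∈ Y_B with zₙ = x and zₘ = A_{m−1}z_{m−1} for m ≤ n. -/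
/-- The stable space `X(n)`: vectors admitting a forward orbit in `Y_B` through them. -/
def stableSet (B : AdmissibleSeqSpace) {X : Type*} [NormedAddCommGroup X]
    [NormedSpace ℝ X] (nn : ℤ → X → ℝ) (A : ℤ → X →L[ℝ] X) (n : ℤ) : Set X :=
  {v | ∃ x : ℤ → X, B.mem (fun m => nn m (x m)) ∧ x n = v ∧
    ∀ m : ℤ, n < m → x m = A (m - 1) (x (m - 1))}

/-- The unstable space `Z(n)`: vectors admitting a backward orbit in `Y_B` through them. -/
def unstableSet (B : AdmissibleSeqSpace) {X : Type*} [NormedAddCommGroup X]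
    [NormedSpace ℝ X] (nn : ℤ → X → ℝ) (A : ℤ → X →L[ℝ] X) (n : ℤ) : Set X :=
  {v | ∃ z : ℤ → X, B.mem (fun m => nn m (z m)) ∧ z n = v ∧
    ∀ m : ℤ, m ≤ n → z m = A (m - 1) (z (m - 1))}

/-- If `T_B : D(T_B) ⊂ Y_B → Y_B` is bijective, then for every `n ∈ ℤ` the space `X`
decomposes as the direct sum `X = X(n) ⊕ Z(n)`. -/
theorem stmt10 (B : AdmissibleSeqSpace) {X : Type*} [NormedAddCommGroup X]
    [NormedSpace ℝ X] [CompleteSpace X]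
    (A : ℤ → X →L[ℝ] X)
    (nn : ℤ → X → ℝ)
    (hnadd : ∀ (n : ℤ) (u v : X), nn n (u + v) ≤ nn n u + nn n v)
    (hnsmul : ∀ (n : ℤ) (c : ℝ) (v : X), nn n (c • v) = |c| * nn n v)
    (heq : ∀ n : ℤ, ∃ c C : ℝ, 0 < c ∧ 0 < C ∧
      ∀ v : X, c * ‖v‖ ≤ nn n v ∧ nn n v ≤ C * ‖v‖)
    (hinj : ∀ x1 x2 : ℤ → X, B.mem (fun n => nn n (x1 n)) → B.mem (fun n => nn n (x2 n)) →
      (∀ n : ℤ, x1 n - A (n - 1) (x1 (n - 1)) = x2 n - A (n - 1) (x2 (n - 1))) → x1 = x2)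
    (hsurj : ∀ y : ℤ → X, B.mem (fun n => nn n (y n)) →
      ∃ x : ℤ → X, B.mem (fun n => nn n (x n)) ∧
        ∀ n : ℤ, x n - A (n - 1) (x (n - 1)) = y n) :
    ∀ n : ℤ,
      (∀ v : X, ∃ a ∈ stableSet B nn A n, ∃ b ∈ unstableSet B nn A n, v = a + b) ∧
      (∀ v : X, v ∈ stableSet B nn A n → v ∈ unstableSet B nn A n → v = 0) := by
  have nn0 : ∀ m : ℤ, nn m (0 : X) = 0 := by
    intro m
    have h := hnsmul m 0 0
    simpa using h
  have nnneg : ∀ (m : ℤ) (v : X), 0 ≤ nn m v := by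
    intro m v
    obtain ⟨c, C, hc, hC, h⟩ := heq m
    exact le_trans (by positivity) (h v).1
  intro n
  constructor
  · intro v
    set y : ℤ → X := fun m => if m = n + 1 then A n v else 0 with hy
    have hymem : B.mem (fun m => nn m (y m)) := by
      have h1 := B.smul_mem (nn (n+1) (A n v)) (B.indicator_mem (n+1))
      have : (fun m => nn m (y m)) =
          ((nn (n+1) (A n v)) • fun k => if k = n+1 then (1:ℝ) else 0) := by
        funext m
        by_cases hm : m = n + 1 <;> simp [hy, hm, nn0]
      rw [this]; exact h1
    obtain ⟨x, hxmem, hxeq⟩ := hsurj y hymem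
    have hx_step : ∀ m : ℤ, m ≠ n + 1 → x m = A (m-1) (x (m-1)) := by
      intro m hm
      have h := hxeq m
      simp only [hy, if_neg hm] at h
      exact sub_eq_zero.mp h
    have hx_np1 : x (n+1) = A n (v + x n) := by
      have h := hxeq (n+1)
      simp only [hy, if_pos rfl, add_sub_cancel_right] at h
      rw [map_add]
      exact sub_eq_iff_eq_add.mp h
    -- stable part witness
    set x' : ℤ → X := fun m => if m < n then 0 else if m = n then v + x n else x m with hx'
    have hamem : (v + x n) ∈ stableSet B nn A n := by
      refine ⟨x', ?_, by simp [hx'], ?_⟩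
      · have hdom : B.mem ((fun m => nn m (x m)) + (nn n v) • fun k => if k = n then (1:ℝ) else 0) :=
          B.add_mem hxmem (B.smul_mem _ (B.indicator_mem n))
        refine B.mono_mem hdom ?_
        intro m
        have hnng : 0 ≤ nn m (x' m) := nnneg _ _
        show |nn m (x' m)| ≤ |nn m (x m) + (nn n v) * (if m = n then (1:ℝ) else 0)|
        have htng : 0 ≤ nn m (x m) + (nn n v) * (if m = n then (1:ℝ) else 0) := by
          have := nnneg m (x m); have := nnneg n v
          split <;> nlinarith
        rw [abs_of_nonneg hnng, abs_of_nonneg htng]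
        rcases lt_trichotomy m n with h | h | h
        · rw [show x' m = 0 from by simp [hx', h], nn0,
            if_neg (ne_of_lt h), mul_zero, add_zero]
          exact nnneg _ _
        · subst h
          rw [show x' m = v + x m from by simp [hx'], if_pos rfl, mul_one]
          linarith [hnadd m v (x m)]
        · rw [show x' m = x m from by simp [hx', not_lt.mpr h.le, h.ne'],
            if_neg h.ne', mul_zero, add_zero]
      · intro m hm
        rcases eq_or_lt_of_le (Int.add_one_le_iff.mpr hm) with h | h
        · -- m = n + 1
          have hm1 : m = n + 1 := h.symm
          subst hm1
          simp only [hx', add_sub_cancel_right]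
          rw [if_neg (by omega : ¬ (n + 1 < n)), if_neg (by omega : ¬ (n + 1 = n)),
            if_neg (lt_irrefl n)]
          simpa using hx_np1
        · -- n + 1 < m
          have h1 : n < m - 1 := by omega
          simp only [hx']
          rw [if_neg (by omega : ¬ m < n), if_neg (by omega : ¬ m = n),
            if_neg (by omega : ¬ m - 1 < n), if_neg (by omega : ¬ m - 1 = n)]
          exact hx_step m (by omega)
    -- unstable part witness
    set z' : ℤ → X := fun m => if m ≤ n then -(x m) else 0 with hz'
    have hbmem : (-(x n)) ∈ unstableSet B nn A n := by
      refine ⟨z', ?_, by simp [hz'], ?_⟩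
      · refine B.mono_mem hxmem ?_
        intro m
        have h1 : nn m (z' m) ≤ nn m (x m) := by
          by_cases hm : m ≤ n
          · simp only [hz', if_pos hm]
            have : (-(x m)) = (-1 : ℝ) • x m := by simp
            rw [this, hnsmul]
            simp
          · simp [hz', if_neg hm, nn0, nnneg]
        rw [abs_of_nonneg (nnneg _ _), abs_of_nonneg (nnneg _ _)]
        exact h1
      · intro m hm
        simp only [hz']
        rw [if_pos hm, if_pos (by omega : m - 1 ≤ n), map_neg]
        rw [hx_step m (by omega)]
    exact ⟨v + x n, hamem, -(x n), hbmem, by abel⟩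
  · intro v hs hu
    obtain ⟨x, hxmem, hxn, hxf⟩ := hs
    obtain ⟨z, hzmem, hzn, hzb⟩ := hu
    set w : ℤ → X := fun m => if n ≤ m then x m else z m with hw
    have hwmem : B.mem (fun m => nn m (w m)) := by
      have hdom : B.mem ((fun m => nn m (x m)) + fun m => nn m (z m)) :=
        B.add_mem hxmem hzmem
      refine B.mono_mem hdom ?_
      intro m
      rw [abs_of_nonneg (nnneg _ _)]
      have h1 : nn m (w m) ≤ nn m (x m) + nn m (z m) := by
        by_cases hm : n ≤ m
        · simp only [hw, if_pos hm]
          have := nnneg m (z m); linarith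
        · simp only [hw, if_neg hm]
          have := nnneg m (x m); linarith
      calc nn m (w m) ≤ nn m (x m) + nn m (z m) := h1
        _ = ((fun m => nn m (x m)) + fun m => nn m (z m)) m := rfl
        _ ≤ |_| := le_abs_self _
    have h0mem : B.mem (fun m => nn m ((0 : ℤ → X) m)) := by
      have : (fun m => nn m ((0 : ℤ → X) m)) = (0 : ℤ → ℝ) := by
        funext m; simp [nn0]
      rw [this]; exact B.zero_mem
    have hTw : ∀ m : ℤ, w m - A (m-1) (w (m-1)) =
        (0 : ℤ → X) m - A (m-1) ((0 : ℤ → X) (m-1)) := by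
      intro m
      simp only [Pi.zero_apply, map_zero, sub_zero]
      rcases lt_trichotomy m n with h | h | h
      · simp only [hw]
        rw [if_neg (by omega : ¬ n ≤ m), if_neg (by omega : ¬ n ≤ m - 1)]
        rw [hzb m (by omega)]; abel
      · subst h
        simp only [hw]
        rw [if_pos le_rfl, if_neg (by omega : ¬ m ≤ m - 1)]
        rw [hxn, ← hzn, hzb m le_rfl]; abel
      · simp only [hw]
        rw [if_pos (by omega : n ≤ m), if_pos (by omega : n ≤ m - 1)]
        rw [hxf m h]; abel
    have hw0 : w = 0 := hinj w 0 hwmem h0mem hTw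
    have h := congrFun hw0 n
    simp only [hw, if_pos (le_refl n), Pi.zero_apply] at h
    rw [hxn] at h
    exact h
end

section
/- If T_B : D(T_B) ⊂ Y_B → Y_B is bijective, then for each n ∈ ℤ the restriction of Aₙ to Z(n) is a bijective linear map from Z(n) onto Z(n+1). -/
/-- If `T_B` is bijective, then for each `n` the map `Aₙ` restricts to a bijection from
`Z(n)` onto `Z(n+1)`. -/
theorem stmt12 (B : AdmissibleSeqSpace) {X : Type*} [NormedAddCommGroup X]
    [NormedSpace ℝ X] [CompleteSpace X]
    (A : ℤ → X →L[ℝ] X)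
    (nn : ℤ → X → ℝ)
    (hnadd : ∀ (n : ℤ) (u v : X), nn n (u + v) ≤ nn n u + nn n v)
    (hnsmul : ∀ (n : ℤ) (c : ℝ) (v : X), nn n (c • v) = |c| * nn n v)
    (heq : ∀ n : ℤ, ∃ c C : ℝ, 0 < c ∧ 0 < C ∧
      ∀ v : X, c * ‖v‖ ≤ nn n v ∧ nn n v ≤ C * ‖v‖)
    (hinj : ∀ x1 x2 : ℤ → X, B.mem (fun n => nn n (x1 n)) → B.mem (fun n => nn n (x2 n)) →
      (∀ n : ℤ, x1 n - A (n - 1) (x1 (n - 1)) = x2 n - A (n - 1) (x2 (n - 1))) → x1 = x2)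
    (hsurj : ∀ y : ℤ → X, B.mem (fun n => nn n (y n)) →
      ∃ x : ℤ → X, B.mem (fun n => nn n (x n)) ∧
        ∀ n : ℤ, x n - A (n - 1) (x (n - 1)) = y n) :
    ∀ n : ℤ, Set.BijOn (A n) (unstableSet B nn A n) (unstableSet B nn A (n + 1)) := by
  have hn0 : ∀ m : ℤ, nn m 0 = 0 := by
    intro m
    have h := hnsmul m 0 0
    simpa using h
  have hnn : ∀ (m : ℤ) (v : X), 0 ≤ nn m v := by
    intro m v
    obtain ⟨c, C, hc, hC, h⟩ := heq m
    exact le_trans (by positivity) (h v).1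
  intro n
  refine ⟨?_, ?_, ?_⟩
  · -- MapsTo
    rintro v ⟨z, hzmem, hzn, hzrec⟩
    refine ⟨fun m => if m ≤ n then z m else if m = n + 1 then A n v else 0, ?_, ?_, ?_⟩
    · apply B.mono_mem (t := (fun m => nn m (z m)) +
        (nn (n + 1) (A n v)) • (fun k => if k = n + 1 then (1 : ℝ) else 0))
      · exact B.add_mem hzmem (B.smul_mem _ (B.indicator_mem (n + 1)))
      · intro m
        have ht : 0 ≤ nn m (z m) + nn (n + 1) (A n v) * (if m = n + 1 then (1 : ℝ) else 0) := by
          have := hnn m (z m); have := hnn (n + 1) (A n v)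
          split <;> nlinarith
        simp only [Pi.add_apply, Pi.smul_apply, smul_eq_mul]
        rw [abs_of_nonneg (hnn _ _), abs_of_nonneg ht]
        by_cases h1 : m ≤ n
        · have hm : m ≠ n + 1 := by omega
          simp only [h1, if_true, hm, if_false, mul_zero, add_zero, le_refl]
        · by_cases h2 : m = n + 1
          · subst h2
            rw [if_neg h1, if_pos rfl, if_pos rfl]
            have := hnn (n + 1) (z (n + 1))
            linarith
          · simp only [h1, if_false, h2, hn0, mul_zero, add_zero]
            have := hnn m (z m); linarith
    · have h1 : ¬ (n + 1 ≤ n) := by omega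
      simp [h1, hzn]
    · intro m hm
      by_cases h1 : m ≤ n
      · have h2 : m - 1 ≤ n := by omega
        have h3 : m ≠ n + 1 := by omega
        simp only [h1, if_true, h2, if_true]
        exact hzrec m h1
      · have h2 : m = n + 1 := by omega
        subst h2
        have h3 : n + 1 - 1 ≤ n := by omega
        simp only [h1, if_false, if_pos rfl, h3, if_true]
        have h4 : n + 1 - 1 = n := by omega
        rw [h4, hzn]
  · -- InjOn
    rintro u ⟨zu, hu, hun, hurec⟩ v ⟨zv, hv, hvn, hvrec⟩ hAuv
    have key : ∀ (z : ℤ → X), B.mem (fun m => nn m (z m)) →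
        B.mem (fun m => nn m (if m ≤ n then z m else 0)) := by
      intro z hz
      apply B.mono_mem hz
      intro m
      by_cases h1 : m ≤ n
      · simp [h1]
      · simp [h1, hn0, abs_of_nonneg (hnn m (z m)), hnn]
    have heqT : ∀ m : ℤ, (if m ≤ n then zu m else 0) - A (m - 1) (if m - 1 ≤ n then zu (m - 1) else 0)
        = (if m ≤ n then zv m else 0) - A (m - 1) (if m - 1 ≤ n then zv (m - 1) else 0) := by
      intro m
      by_cases h1 : m ≤ n
      · have h2 : m - 1 ≤ n := by omega
        simp only [h1, if_true, h2, if_true]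
        rw [← hurec m h1, ← hvrec m h1]
        simp
      · by_cases h2 : m = n + 1
        · subst h2
          have h3 : n + 1 - 1 ≤ n := by omega
          have h4 : n + 1 - 1 = n := by omega
          simp only [h1, if_false, h3, if_true, h4, le_refl, hun, hvn, hAuv]
        · have h3 : ¬ (m - 1 ≤ n) := by omega
          simp [h1, h3]
    have := hinj _ _ (key zu hu) (key zv hv) heqT
    have hfn := congrFun this n
    simpa [hun, hvn] using hfn
  · -- SurjOn
    rintro w ⟨z, hzmem, hzn, hzrec⟩
    refine ⟨z n, ⟨z, hzmem, rfl, fun m hm => hzrec m (by omega)⟩, ?_⟩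
    have h1 := hzrec (n + 1) (le_refl _)
    have h2 : n + 1 - 1 = n := by omega
    rw [h2] at h1
    rw [← h1, hzn]
end
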